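/- arXiv:2208.08549 — 5 statements merged into one kernel-verified Lean document; each statement's English description precedes it below -/
import Mathlib

section
/- Let J be a nonempty finite index set, let A_j > 0 and p_j > 0 for each j ∈ J, and let K > 0 satisfy Σ_{j∈J} A_j K^{−p_j} = 1. Then max_{j∈J} A_j^{1/p_j} ≤ K ≤ Σ_{j∈J} (|J| · A_j)^{1/p_j}. -/
/-! The terms `A j * K ^ (-p j)` are nonnegative and sum to `1`, so each is at most `1` and, by
pigeonhole, one of them is at least `1 / |J|`. For `K > 0` these say `A j ^ (1 / p j) ≤ K` and
`K ≤ (|J| * A j) ^ (1 / p j)` respectively. -/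

namespace Real

variable {a k p : ℝ}

lemma rpow_one_div_le_iff_mul_rpow_neg_le_one (ha : 0 ≤ a) (hk : 0 < k) (hp : 0 < p) :
    a ^ (1 / p) ≤ k ↔ a * k ^ (-p) ≤ 1 := by
  rw [one_div, rpow_inv_le_iff_of_pos ha hk.le hp, rpow_neg hk.le, ← div_eq_mul_inv,
    div_le_one (rpow_pos_of_pos hk p)]

lemma le_rpow_one_div_iff_one_le_mul_rpow_neg (ha : 0 ≤ a) (hk : 0 < k) (hp : 0 < p) :
    k ≤ a ^ (1 / p) ↔ 1 ≤ a * k ^ (-p) := by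
  rw [one_div, le_rpow_inv_iff_of_pos hk.le ha hp, rpow_neg hk.le, ← div_eq_mul_inv,
    one_le_div (rpow_pos_of_pos hk p)]

end Real

lemma Fintype.exists_one_le_card_mul_of_sum_eq_one {ι : Type*} [Fintype ι] {f : ι → ℝ}
    (hf : ∑ i, f i = 1) : ∃ i, 1 ≤ Fintype.card ι * f i := by
  have hne : (Finset.univ : Finset ι).Nonempty := by
    by_contra h
    simp [Finset.not_nonempty_iff_eq_empty.mp h] at hf
  obtain ⟨i, -, hi⟩ := Finset.exists_le_of_sum_le hne (f := fun _ => (1 : ℝ))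
    (g := fun i => Fintype.card ι * f i) (by simp [← Finset.mul_sum, hf])
  exact ⟨i, hi⟩

theorem implicit_rate_bounds_general
    {J : Type*} [Fintype J]
    (A p : J → ℝ) (hA : ∀ j, 0 < A j) (hp : ∀ j, 0 < p j)
    (K : ℝ) (hK : 0 < K) (hKeq : ∑ j, A j * K ^ (-(p j)) = 1) :
    (∀ j, A j ^ (1 / p j) ≤ K) ∧
      K ≤ ∑ j, ((Fintype.card J : ℝ) * A j) ^ (1 / p j) := by
  have hterm : ∀ j, 0 ≤ A j * K ^ (-(p j)) := fun j => by have := hA j; positivity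
  refine ⟨fun j => ?_, ?_⟩
  · rw [Real.rpow_one_div_le_iff_mul_rpow_neg_le_one (hA j).le hK (hp j), ← hKeq]
    exact Finset.single_le_sum (fun i _ => hterm i) (Finset.mem_univ j)
  · obtain ⟨j, hj⟩ := Fintype.exists_one_le_card_mul_of_sum_eq_one hKeq
    have hKj : K ≤ ((Fintype.card J : ℝ) * A j) ^ (1 / p j) := by
      rw [Real.le_rpow_one_div_iff_one_le_mul_rpow_neg (by have := hA j; positivity) hK (hp j),
        mul_assoc]
      exact hj
    exact hKj.trans <|
      Finset.single_le_sum (f := fun i => ((Fintype.card J : ℝ) * A i) ^ (1 / p i))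
        (fun i _ => by have := hA i; positivity) (Finset.mem_univ j)

/-- **Bounds on the implicit rate.** If `K > 0` solves `∑ j, A j * K ^ (-(p j)) = 1`
with all `A j, p j > 0` over a nonempty finite index set `J`, then
`max_j (A j) ^ (1 / p j) ≤ K ≤ ∑ j, (|J| * A j) ^ (1 / p j)`. -/
theorem implicit_rate_bounds
    {J : Type*} [Fintype J] [Nonempty J]
    (A p : J → ℝ) (hA : ∀ j, 0 < A j) (hp : ∀ j, 0 < p j)
    (K : ℝ) (hK : 0 < K) (hKeq : ∑ j, A j * K ^ (-(p j)) = 1) :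
    (∀ j, A j ^ (1 / p j) ≤ K) ∧
      K ≤ ∑ j, ((Fintype.card J : ℝ) * A j) ^ (1 / p j) :=
  implicit_rate_bounds_general A p hA hp K hK hKeq
end

section
/- Define F : ℝ → ℝ by F(x) = (|x| + x²)/2. Then for every M ≥ 0 and every v ∈ [0,1] there exist x, y ∈ ℝ with x ≠ 0 and y ≠ 0 such that |F′(x) − F′(y)| > M |x − y|^v, where F′ denotes the derivative of F (which exists at every nonzero point). Hence F is not (M,v)-Hölder smooth for any M ≥ 0 and v ∈ [0,1], despite being the sum of f₁(x) = |x|/2, whose derivative satisfies |f₁′(x) − f₁′(y)| ≤ 1 for all nonzero x, y, and f₂(x) = x²/2, whose derivative is 1-Lipschitz. -/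
lemma hasDerivAt_F {x : ℝ} (hx : x ≠ 0) :
    HasDerivAt (fun t : ℝ => (|t| + t ^ 2) / 2) (((SignType.sign x : ℝ) + 2 * x) / 2) x := by
  have h1 : HasDerivAt (fun t : ℝ => |t| + t ^ 2) ((SignType.sign x : ℝ) + 2 * x) x := by
    have := (hasDerivAt_abs hx).add (hasDerivAt_pow 2 x)
    simp at this; exact this
  simpa using h1.div_const 2

lemma derivF {x : ℝ} (hx : x ≠ 0) :
    deriv (fun t : ℝ => (|t| + t ^ 2) / 2) x = ((SignType.sign x : ℝ) + 2 * x) / 2 :=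
  (hasDerivAt_F hx).deriv

lemma derivAbsHalf {x : ℝ} (hx : x ≠ 0) :
    deriv (fun t : ℝ => |t| / 2) x = (SignType.sign x : ℝ) / 2 := by
  have : HasDerivAt (fun t : ℝ => |t| / 2) ((SignType.sign x : ℝ) / 2) x :=
    (hasDerivAt_abs hx).div_const 2
  exact this.deriv

/-- **A sum of Hölder smooth functions need not be Hölder smooth.**
`F x = (|x| + x²)/2` is differentiable at every nonzero point, but for every
`M ≥ 0` and `v ∈ [0,1]` there are nonzero `x, y` with
`|F′(x) − F′(y)| > M |x − y|^v`; so `F` is not `(M,v)`-Hölder smooth for any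
`(M, v)`, despite being the sum of `f₁ x = |x|/2` (whose derivative at nonzero
points varies by at most `1`) and `f₂ x = x²/2` (whose derivative is
`1`-Lipschitz). -/
theorem abs_add_sq_div_two_not_holder_smooth :
    (∀ x : ℝ, x ≠ 0 → DifferentiableAt ℝ (fun t : ℝ => (|t| + t ^ 2) / 2) x) ∧
    (∀ M : ℝ, 0 ≤ M → ∀ v ∈ Set.Icc (0 : ℝ) 1,
      ∃ x y : ℝ, x ≠ 0 ∧ y ≠ 0 ∧
        M * |x - y| ^ v <
          |deriv (fun t : ℝ => (|t| + t ^ 2) / 2) x -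
            deriv (fun t : ℝ => (|t| + t ^ 2) / 2) y|) ∧
    (∀ x y : ℝ, x ≠ 0 → y ≠ 0 →
      |deriv (fun t : ℝ => |t| / 2) x - deriv (fun t : ℝ => |t| / 2) y| ≤ 1) ∧
    LipschitzWith 1 (deriv fun t : ℝ => t ^ 2 / 2) := by
  refine ⟨fun x hx => (hasDerivAt_F hx).differentiableAt, ?_, ?_, ?_⟩
  · intro M hM v hv
    rcases eq_or_lt_of_le hv.1 with hv0 | hv0
    · -- v = 0
      have hx : (M + 1 : ℝ) ≠ 0 := by positivity
      have hy : (-(M + 1) : ℝ) ≠ 0 := neg_ne_zero.mpr hx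
      refine ⟨M + 1, -(M + 1), hx, hy, ?_⟩
      rw [derivF hx, derivF hy, ← hv0]
      have hs1 : (SignType.sign (M + 1 : ℝ) : ℝ) = 1 := by
        simp [sign_pos (by positivity : (0:ℝ) < M + 1)]
      have hs2 : (SignType.sign (-(M + 1) : ℝ) : ℝ) = -1 := by
        have h0 : (-(M+1) : ℝ) < 0 := by linarith
        rw [sign_neg h0]; simp
      rw [hs1, hs2, Real.rpow_zero]
      rw [show ((1:ℝ) + 2 * (M + 1)) / 2 - (-1 + 2 * -(M + 1)) / 2 = 2 * M + 3 by ring]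
      rw [abs_of_nonneg (by linarith)]
      linarith
    · -- v > 0
      set δ : ℝ := (1 / (M + 1)) ^ (1 / v) with hδdef
      have hδpos : 0 < δ := Real.rpow_pos_of_pos (by positivity) _
      have hδv : δ ^ v = 1 / (M + 1) := by
        rw [hδdef, ← Real.rpow_mul (by positivity),
          one_div_mul_cancel hv0.ne', Real.rpow_one]
      have hx : (δ / 2 : ℝ) ≠ 0 := by positivity
      have hy : (-(δ / 2) : ℝ) ≠ 0 := neg_ne_zero.mpr hx
      refine ⟨δ / 2, -(δ / 2), hx, hy, ?_⟩
      rw [derivF hx, derivF hy]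
      have hs1 : (SignType.sign (δ / 2 : ℝ) : ℝ) = 1 := by
        simp [sign_pos (by positivity : (0:ℝ) < δ / 2)]
      have hs2 : (SignType.sign (-(δ / 2) : ℝ) : ℝ) = -1 := by
        have h0 : (-(δ/2) : ℝ) < 0 := by linarith
        rw [sign_neg h0]; simp
      rw [hs1, hs2]
      rw [show (δ / 2 - -(δ / 2) : ℝ) = δ by ring]
      rw [abs_of_pos hδpos, hδv]
      rw [show ((1:ℝ) + 2 * (δ / 2)) / 2 - (-1 + 2 * -(δ / 2)) / 2 = 1 + δ by ring]
      rw [abs_of_nonneg (by linarith)]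
      have h1 : M * (1 / (M + 1)) < 1 := by
        rw [mul_one_div, div_lt_one (by positivity)]
        linarith
      linarith
  · intro x y hx hy
    rw [derivAbsHalf hx, derivAbsHalf hy]
    have h1 : |(SignType.sign x : ℝ)| ≤ 1 := by
      rcases hx.lt_or_gt with h | h
      · rw [sign_neg h]; norm_num
      · rw [sign_pos h]; norm_num
    have h2 : |(SignType.sign y : ℝ)| ≤ 1 := by
      rcases hy.lt_or_gt with h | h
      · rw [sign_neg h]; norm_num
      · rw [sign_pos h]; norm_num
    calc |(SignType.sign x : ℝ) / 2 - (SignType.sign y : ℝ) / 2|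
        ≤ |(SignType.sign x : ℝ) / 2| + |(SignType.sign y : ℝ) / 2| := abs_sub _ _
      _ ≤ 1 := by rw [abs_div, abs_div] ; simp only [abs_two]; linarith
  · have hd : (deriv fun t : ℝ => t ^ 2 / 2) = fun t => t := by
      funext t
      have : HasDerivAt (fun t : ℝ => t ^ 2 / 2) t t := by
        simpa using (hasDerivAt_pow 2 t).div_const 2
      exact this.deriv
    rw [hd]
    exact LipschitzWith.id
end

section
/- Let M ≥ 0, v ∈ [0,1), δ > 0, and let L ≥ ((1−v)/((1+v)δ))^{(1−v)/(1+v)} · M^{2/(1+v)}. Then for every t ≥ 0, (M/(1+v)) t^{1+v} ≤ (L/2) t² + δ/2. -/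
/-- **Scalar inexact-smoothness inequality.** For `M ≥ 0`, `v ∈ [0,1)`, `δ > 0`
and `L ≥ ((1-v)/((1+v)δ))^((1-v)/(1+v)) * M^(2/(1+v))`, the Hölder upper model
`M t^(1+v)/(1+v)` is dominated by the quadratic model `L t²/2 + δ/2` for all
`t ≥ 0`. -/
theorem holder_model_le_quadratic_model
    (M v δ L : ℝ) (hM : 0 ≤ M) (hv : v ∈ Set.Ico (0 : ℝ) 1) (hδ : 0 < δ)
    (hL : ((1 - v) / ((1 + v) * δ)) ^ ((1 - v) / (1 + v)) * M ^ (2 / (1 + v)) ≤ L) :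
    ∀ t : ℝ, 0 ≤ t → M / (1 + v) * t ^ (1 + v) ≤ L / 2 * t ^ 2 + δ / 2 := by
  obtain ⟨hv0, hv1⟩ := hv
  have c1 : (0:ℝ) < 1 + v := by linarith
  have c2 : (0:ℝ) < 1 - v := by linarith
  intro t ht
  rcases eq_or_lt_of_le hM with hM0 | hMpos
  · -- M = 0
    have hz : ((0:ℝ)) ^ (2 / (1 + v)) = 0 := Real.zero_rpow (by positivity)
    rw [← hM0] at hL ⊢
    rw [hz, mul_zero] at hL
    have hpos : (0:ℝ) ≤ L / 2 * t ^ 2 + δ / 2 := by positivity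
    simpa using hpos
  · -- M > 0
    have hL0 : 0 < L := lt_of_lt_of_le (by positivity) hL
    set p : ℝ := 2 / (1 + v) with hp
    set q : ℝ := 2 / (1 - v) with hq
    set r : ℝ := (1 + v) / (1 - v) with hr
    have hq0 : 0 < q := by positivity
    have hpq : p.HolderConjugate q := by
      rw [Real.holderConjugate_iff]; constructor
      · rw [hp, lt_div_iff₀ c1]; linarith
      · rw [hp, hq]; field_simp; ring
    set e : ℝ := (1 + v) / 2 with he
    set a : ℝ := (L / (1 + v)) ^ e * t ^ (1 + v) with ha
    set b : ℝ := M / (1 + v) * ((1 + v) / L) ^ e with hb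
    have ha0 : 0 ≤ a := by positivity
    have hb0 : 0 ≤ b := by positivity
    have key := Real.young_inequality_of_nonneg ha0 hb0 hpq
    -- a * b = M/(1+v) * t^(1+v)
    have h1 : (L / (1 + v)) ^ e * ((1 + v) / L) ^ e = 1 := by
      rw [← Real.mul_rpow (by positivity) (by positivity),
        show L / (1 + v) * ((1 + v) / L) = 1 by field_simp]
      exact Real.one_rpow _
    have hab : a * b = M / (1 + v) * t ^ (1 + v) := by
      rw [ha, hb]
      calc (L / (1 + v)) ^ e * t ^ (1 + v) * (M / (1 + v) * ((1 + v) / L) ^ e)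
          = ((L / (1 + v)) ^ e * ((1 + v) / L) ^ e) * (M / (1 + v) * t ^ (1 + v)) := by
            ring
        _ = M / (1 + v) * t ^ (1 + v) := by rw [h1]; ring
    -- a ^ p = L/(1+v) * t^2
    have hap : a ^ p = L / (1 + v) * t ^ 2 := by
      rw [ha, Real.mul_rpow (by positivity) (Real.rpow_nonneg ht _),
        ← Real.rpow_mul (by positivity : (0:ℝ) ≤ L / (1 + v)),
        ← Real.rpow_mul ht,
        show e * p = 1 by rw [he, hp]; field_simp,
        show (1 + v) * p = 2 by rw [hp]; field_simp,
        Real.rpow_one, show (2:ℝ) = ((2:ℕ):ℝ) by norm_num,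
        Real.rpow_natCast]
    -- b ^ q = M^q / ((1+v) * L^r)
    have hq' : (1 + v) ^ q = (1 + v) ^ r * (1 + v) := by
      rw [show q = r + 1 by rw [hq, hr]; field_simp; norm_num, Real.rpow_add c1, Real.rpow_one]
    have hbq : b ^ q = M ^ q / ((1 + v) * L ^ r) := by
      rw [hb, Real.mul_rpow (by positivity) (by positivity),
        ← Real.rpow_mul (by positivity : (0:ℝ) ≤ (1 + v) / L),
        show e * q = r by rw [he, hq, hr]; field_simp,
        Real.div_rpow hM c1.le, Real.div_rpow c1.le hL0.le, hq']
      have hLr : (0:ℝ) < L ^ r := Real.rpow_pos_of_pos hL0 r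
      have hvr : (0:ℝ) < (1 + v) ^ r := Real.rpow_pos_of_pos c1 r
      field_simp
    -- from hL : (1-v)/((1+v)δ) * M^q ≤ L^r
    have h2 := Real.rpow_le_rpow (by positivity) hL (by positivity : (0:ℝ) ≤ r)
    rw [Real.mul_rpow (by positivity) (by positivity),
      ← Real.rpow_mul (by positivity : (0:ℝ) ≤ (1 - v) / ((1 + v) * δ)),
      ← Real.rpow_mul hM,
      show (1 - v) / (1 + v) * r = 1 by rw [hr]; field_simp,
      show 2 / (1 + v) * r = q by rw [hr, hq]; field_simp,
      Real.rpow_one] at h2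
    -- b^q ≤ δ/(1-v)
    have h4 : b ^ q ≤ δ / (1 - v) := by
      have hLr : (0:ℝ) < L ^ r := Real.rpow_pos_of_pos hL0 r
      rw [hbq, div_le_div_iff₀ (by positivity) c2]
      have h5 : (1 - v) * M ^ q ≤ L ^ r * ((1 + v) * δ) := by
        calc (1 - v) * M ^ q
            = (1 - v) / ((1 + v) * δ) * M ^ q * ((1 + v) * δ) := by field_simp
          _ ≤ L ^ r * ((1 + v) * δ) :=
              mul_le_mul_of_nonneg_right h2 (by positivity)
      nlinarith [h5]
    -- assemble
    have hpdiv : a ^ p / p = L / 2 * t ^ 2 := by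
      rw [hap, hp]; field_simp
    have hqdiv : b ^ q / q ≤ δ / 2 := by
      rw [div_le_iff₀ hq0]
      calc b ^ q ≤ δ / (1 - v) := h4
        _ = δ / 2 * q := by rw [hq]; field_simp
    calc M / (1 + v) * t ^ (1 + v) = a * b := hab.symm
      _ ≤ a ^ p / p + b ^ q / q := key
      _ ≤ L / 2 * t ^ 2 + δ / 2 := by rw [hpdiv]; linarith
end

section
/- Let E be a real inner product space, Q ⊆ E a convex set, and f : E → ℝ a function differentiable on Q whose gradient is (M,v)-Hölder continuous on Q, i.e., ‖∇f(x) − ∇f(y)‖ ≤ M ‖x − y‖^v for all x, y ∈ Q, where M ≥ 0 and v ∈ [0,1]. Then for all x, y ∈ Q, f(y) ≤ f(x) + ⟨∇f(x), y − x⟩ + (M/(1+v)) ‖y − x‖^{1+v}. -/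
open scoped RealInnerProductSpace

/-- **Hölder descent lemma.** If `f` is differentiable on a convex set `Q` with
`(M,v)`-Hölder continuous gradient `g`, then for all `x, y ∈ Q`,
`f y ≤ f x + ⟪g x, y - x⟫ + (M/(1+v)) ‖y - x‖^(1+v)`. -/
theorem holder_smooth_upper_bound
    {E : Type*} [NormedAddCommGroup E] [InnerProductSpace ℝ E] [CompleteSpace E]
    (Q : Set E) (hQ : Convex ℝ Q)
    (f : E → ℝ) (g : E → E) (M v : ℝ)
    (hM : 0 ≤ M) (hv : v ∈ Set.Icc (0 : ℝ) 1)
    (hdiff : ∀ x ∈ Q, HasGradientAt f (g x) x)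
    (hholder : ∀ x ∈ Q, ∀ y ∈ Q, ‖g x - g y‖ ≤ M * ‖x - y‖ ^ v) :
    ∀ x ∈ Q, ∀ y ∈ Q,
      f y ≤ f x + ⟪g x, y - x⟫ + M / (1 + v) * ‖y - x‖ ^ (1 + v) := by
  intro x hx y hy
  obtain ⟨hv0, hv1⟩ := hv
  rcases eq_or_lt_of_le hv0 with hveq | hvpos
  · -- v = 0 case: mean value inequality
    subst hveq
    set F : E → ℝ := fun z => f z - ⟪g x, z⟫ with hF
    have hder : ∀ z ∈ Q, HasFDerivWithinAt F
        ((InnerProductSpace.toDual ℝ E) (g z) - (InnerProductSpace.toDual ℝ E) (g x)) Q z := by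
      intro z hz
      exact (((hdiff z hz).hasFDerivAt.sub
        ((InnerProductSpace.toDual ℝ E (g x)).hasFDerivAt)).hasFDerivWithinAt)
    have hbound : ∀ z ∈ Q,
        ‖(InnerProductSpace.toDual ℝ E) (g z) - (InnerProductSpace.toDual ℝ E) (g x)‖ ≤ M := by
      intro z hz
      rw [← map_sub, (InnerProductSpace.toDual ℝ E).norm_map]
      simpa using hholder z hz x hx
    have key := hQ.norm_image_sub_le_of_norm_hasFDerivWithin_le hder hbound hx hy
    have h1 : F y - F x ≤ M * ‖y - x‖ := (le_abs_self _).trans (by simpa using key)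
    have h2 : F y - F x = f y - f x - ⟪g x, y - x⟫ := by
      simp [hF, inner_sub_right]; ring
    rw [h2] at h1
    have h3 : M / (1 + 0) * ‖y - x‖ ^ ((1:ℝ) + 0) = M * ‖y - x‖ := by
      norm_num
    rw [h3]; linarith
  · -- v > 0
    set u := y - x with hu
    set γ : ℝ → E := fun t => x + t • u with hγ
    have hγmem : ∀ t ∈ Set.Icc (0:ℝ) 1, γ t ∈ Q := fun t ht =>
      hQ.add_smul_sub_mem hx hy ht
    set ψ : ℝ → ℝ := fun t => ⟪g (γ t), u⟫ with hψ
    have hderiv : ∀ t ∈ Set.uIcc (0:ℝ) 1, HasDerivAt (fun t => f (γ t)) (ψ t) t := by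
      intro t ht
      rw [Set.uIcc_of_le (by norm_num : (0:ℝ) ≤ 1)] at ht
      have hγd : HasDerivAt γ u t := by
        have h0 := ((hasDerivAt_id t).smul_const u).const_add x
        simp only [one_smul] at h0
        exact h0
      have := ((hdiff _ (hγmem t ht)).hasFDerivAt).comp_hasDerivAt t hγd
      simp [ψ, InnerProductSpace.toDual_apply_apply] at this
      exact this
    -- Hölder bound along the segment
    have hseg : ∀ s ∈ Set.Icc (0:ℝ) 1, ∀ t ∈ Set.Icc (0:ℝ) 1,
        ‖g (γ s) - g (γ t)‖ ≤ M * (|s - t| * ‖u‖) ^ v := by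
      intro s hs t ht
      have := hholder _ (hγmem s hs) _ (hγmem t ht)
      have hst : γ s - γ t = (s - t) • u := by
        simp [γ, sub_smul]
      rwa [hst, norm_smul, Real.norm_eq_abs] at this
    have hψcont : ContinuousOn ψ (Set.Icc 0 1) := by
      intro t ht
      have hb : Filter.Tendsto (fun s => M * (|s - t| * ‖u‖) ^ v * ‖u‖)
          (nhdsWithin t (Set.Icc 0 1)) (nhds 0) := by
        have h1 : ContinuousAt (fun s : ℝ => M * (|s - t| * ‖u‖) ^ v * ‖u‖) t := by
          apply ContinuousAt.mul _ continuousAt_const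
          apply ContinuousAt.mul continuousAt_const
          exact (Real.continuousAt_rpow_const _ _ (Or.inr hv0)).comp
            (((continuous_abs.comp (continuous_id.sub continuous_const)).mul
              continuous_const).continuousAt)
        have h2 : (fun s : ℝ => M * (|s - t| * ‖u‖) ^ v * ‖u‖) t = 0 := by
          simp [Real.zero_rpow (ne_of_gt hvpos)]
        have h3 : Filter.Tendsto (fun s => M * (|s - t| * ‖u‖) ^ v * ‖u‖)
            (nhdsWithin t (Set.Icc 0 1))
            (nhds ((fun s : ℝ => M * (|s - t| * ‖u‖) ^ v * ‖u‖) t)) :=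
          h1.continuousWithinAt
        rwa [h2] at h3
      have htend : Filter.Tendsto (fun s => ψ s - ψ t)
          (nhdsWithin t (Set.Icc 0 1)) (nhds 0) := by
        apply squeeze_zero_norm' _ hb
        filter_upwards [self_mem_nhdsWithin] with s hs
        have he : ψ s - ψ t = ⟪g (γ s) - g (γ t), u⟫ := by simp [ψ, inner_sub_left]
        rw [he, Real.norm_eq_abs]
        calc |⟪g (γ s) - g (γ t), u⟫| ≤ ‖g (γ s) - g (γ t)‖ * ‖u‖ :=
              abs_real_inner_le_norm (g (γ s) - g (γ t)) u
          _ ≤ M * (|s - t| * ‖u‖) ^ v * ‖u‖ :=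
              mul_le_mul_of_nonneg_right (hseg s hs t ht) (norm_nonneg _)
      have : Filter.Tendsto ψ (nhdsWithin t (Set.Icc 0 1)) (nhds (ψ t)) := by
        have := htend.add_const (ψ t)
        simpa using this
      exact this
    have hψint : IntervalIntegrable ψ MeasureTheory.volume 0 1 := by
      apply ContinuousOn.intervalIntegrable
      rwa [Set.uIcc_of_le (by norm_num : (0:ℝ) ≤ 1)]
    have hFTC : ∫ t in (0:ℝ)..1, ψ t = f (γ 1) - f (γ 0) :=
      intervalIntegral.integral_eq_sub_of_hasDerivAt hderiv hψint
    have hγ0 : γ 0 = x := by simp [γ]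
    have hγ1 : γ 1 = y := by simp [γ, u]
    -- pointwise bound and integral comparison
    set B : ℝ → ℝ := fun t => ⟪g x, u⟫ + M * t ^ v * ‖u‖ ^ (v + 1) with hB
    have hBcont : Continuous B := by
      apply continuous_const.add
      apply Continuous.mul _ continuous_const
      apply continuous_const.mul
      exact continuous_iff_continuousAt.2 fun t =>
        (Real.continuousAt_rpow_const _ _ (Or.inr hv0)).comp continuousAt_id
    have hBint : IntervalIntegrable B MeasureTheory.volume 0 1 :=
      hBcont.intervalIntegrable 0 1
    have hle : ∀ t ∈ Set.Icc (0:ℝ) 1, ψ t ≤ B t := by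
      intro t ht
      have h1 : ψ t = ⟪g x, u⟫ + ⟪g (γ t) - g x, u⟫ := by simp [ψ, inner_sub_left]
      rw [h1]
      have hBt : B t = ⟪g x, u⟫ + M * t ^ v * ‖u‖ ^ (v + 1) := rfl
      rw [hBt]
      have h2 : ⟪g (γ t) - g x, u⟫ ≤ M * t ^ v * ‖u‖ ^ (v + 1) := by
        calc ⟪g (γ t) - g x, u⟫ ≤ ‖g (γ t) - g x‖ * ‖u‖ := real_inner_le_norm _ _
          _ ≤ M * (|t - 0| * ‖u‖) ^ v * ‖u‖ := by
              have := hseg t ht 0 (by norm_num)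
              rw [hγ0] at this
              exact mul_le_mul_of_nonneg_right this (norm_nonneg _)
          _ = M * t ^ v * ‖u‖ ^ (v + 1) := by
              rw [sub_zero, abs_of_nonneg ht.1,
                Real.mul_rpow ht.1 (norm_nonneg _),
                Real.rpow_add' (norm_nonneg _) (by positivity), Real.rpow_one]
              ring
      linarith
    have hmono := intervalIntegral.integral_mono_on (by norm_num : (0:ℝ) ≤ 1) hψint hBint hle
    have hBval : ∫ t in (0:ℝ)..1, B t = ⟪g x, u⟫ + M / (1 + v) * ‖u‖ ^ (1 + v) := by
      have hcont2 : Continuous (fun t : ℝ => M * t ^ v * ‖u‖ ^ (v + 1)) := by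
        apply Continuous.mul _ continuous_const
        apply continuous_const.mul
        exact continuous_iff_continuousAt.2 fun t =>
          (Real.continuousAt_rpow_const _ _ (Or.inr hv0)).comp continuousAt_id
      rw [hB, intervalIntegral.integral_add intervalIntegrable_const
        (hcont2.intervalIntegrable 0 1), intervalIntegral.integral_const]
      have h4 : ∫ t in (0:ℝ)..1, M * t ^ v * ‖u‖ ^ (v + 1)
          = (M * ‖u‖ ^ (v + 1)) * ∫ t in (0:ℝ)..1, t ^ v := by
        rw [← intervalIntegral.integral_const_mul]
        congr 1; ext t; ring
      rw [h4, integral_rpow (Or.inl (by linarith : (-1:ℝ) < v)),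
        Real.one_rpow, Real.zero_rpow (by positivity : v + 1 ≠ 0), add_comm v 1]
      simp
      ring
    rw [hγ0, hγ1] at hFTC
    rw [hBval] at hmono
    rw [hFTC] at hmono
    linarith
end

section
/- Let E be a real inner product space, Q ⊆ E a convex set, and f : E → ℝ differentiable on Q and (M,v)-Hölder smooth on Q with M ≥ 0 and v ∈ [0,1). Then for every δ > 0, setting L(δ) = ((1−v)/((1+v)δ))^{(1−v)/(1+v)} · M^{2/(1+v)}, one has for all x, y ∈ Q: f(y) ≤ f(x) + ⟨∇f(x), y − x⟩ + (L(δ)/2) ‖y − x‖² + δ/2. -/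
open scoped RealInnerProductSpace
open MeasureTheory


lemma key_scalar (M v δ r : ℝ) (hM : 0 ≤ M) (hv0 : 0 ≤ v) (hv1 : v < 1)
    (hδ : 0 < δ) (hr : 0 ≤ r) :
    M / (1 + v) * r ^ (1 + v) ≤
      ((1 - v) / ((1 + v) * δ)) ^ ((1 - v) / (1 + v)) * M ^ (2 / (1 + v)) / 2 * r ^ 2 + δ / 2 := by
  have h1v : (0:ℝ) < 1 + v := by linarith
  have h1v' : (0:ℝ) < 1 - v := by linarith
  set c : ℝ := (1 - v) / ((1 + v) * δ) with hc_def
  have hc : 0 < c := div_pos h1v' (mul_pos h1v hδ)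
  set L : ℝ := c ^ ((1 - v) / (1 + v)) * M ^ (2 / (1 + v)) with hL_def
  have hL : 0 ≤ L := mul_nonneg (Real.rpow_nonneg hc.le _) (Real.rpow_nonneg hM _)
  set A : ℝ := L * r ^ 2 / (1 + v) with hA_def
  set B : ℝ := δ / (1 - v) with hB_def
  have hA : 0 ≤ A := div_nonneg (mul_nonneg hL (sq_nonneg r)) h1v.le
  have hB : 0 ≤ B := (div_pos hδ h1v').le
  have hgm := Real.geom_mean_le_arith_mean2_weighted
    (by linarith : (0:ℝ) ≤ (1 + v)/2) (by linarith : (0:ℝ) ≤ (1 - v)/2)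
    hA hB (by ring)
  -- LHS equality
  have hkey : A ^ ((1 + v)/2) * B ^ ((1 - v)/2) = M / (1 + v) * r ^ (1 + v) := by
    have hrp : (r:ℝ) ^ 2 = r ^ ((2:ℝ)) := by
      rw [← Real.rpow_natCast r 2]; norm_num
    have hA' : A ^ ((1 + v)/2)
        = c ^ ((1 - v)/2) * M * r ^ (1 + v) / (1 + v) ^ ((1 + v)/2) := by
      rw [hA_def, Real.div_rpow (mul_nonneg hL (sq_nonneg r)) h1v.le,
        Real.mul_rpow hL (sq_nonneg r), hL_def,
        Real.mul_rpow (Real.rpow_nonneg hc.le _) (Real.rpow_nonneg hM _),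
        ← Real.rpow_mul hc.le, ← Real.rpow_mul hM, hrp, ← Real.rpow_mul hr]
      have e1 : (1 - v) / (1 + v) * ((1 + v)/2) = (1 - v)/2 := by
        field_simp
      have e2 : 2 / (1 + v) * ((1 + v)/2) = 1 := by
        field_simp
      have e3 : (2:ℝ) * ((1 + v)/2) = 1 + v := by ring
      rw [e1, e2, e3, Real.rpow_one]
    rw [hA', hB_def]
    have hcB : c * (δ / (1 - v)) = 1 / (1 + v) := by
      rw [hc_def]; field_simp
    have h1 : c ^ ((1 - v)/2) * (δ / (1 - v)) ^ ((1 - v)/2)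
        = ((1 + v):ℝ) ^ (-((1 - v)/2)) := by
      rw [← Real.mul_rpow hc.le (div_nonneg hδ.le h1v'.le), hcB, one_div,
        Real.inv_rpow h1v.le, ← Real.rpow_neg h1v.le]
    calc c ^ ((1 - v)/2) * M * r ^ (1 + v) / (1 + v) ^ ((1 + v)/2) * (δ / (1 - v)) ^ ((1 - v)/2)
        = (c ^ ((1 - v)/2) * (δ / (1 - v)) ^ ((1 - v)/2)) * M * r ^ (1 + v) / (1 + v) ^ ((1 + v)/2) := by
          ring
      _ = ((1 + v):ℝ) ^ (-((1 - v)/2)) * M * r ^ (1 + v) / (1 + v) ^ ((1 + v)/2) := by rw [h1]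
      _ = M / (1 + v) * r ^ (1 + v) := by
          rw [mul_assoc, mul_comm, mul_div_assoc, ← Real.rpow_sub h1v]
          have h2 : -((1 - v)/2) - (1 + v)/2 = -1 := by ring
          rw [h2, Real.rpow_neg_one]
          ring
  rw [hkey] at hgm
  refine hgm.trans (le_of_eq ?_)
  rw [hA_def, hB_def]
  field_simp


lemma holder_descent
    {E : Type*} [NormedAddCommGroup E] [InnerProductSpace ℝ E] [CompleteSpace E]
    (Q : Set E) (hQ : Convex ℝ Q)
    (f : E → ℝ) (g : E → E) (M v : ℝ)
    (hM : 0 ≤ M) (hv0 : 0 ≤ v)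
    (hdiff : ∀ x ∈ Q, HasGradientAt f (g x) x)
    (hholder : ∀ x ∈ Q, ∀ y ∈ Q, ‖g x - g y‖ ≤ M * ‖x - y‖ ^ v)
    {x : E} (hx : x ∈ Q) {y : E} (hy : y ∈ Q) :
    f y ≤ f x + ⟪g x, y - x⟫ + M / (1 + v) * ‖y - x‖ ^ (1 + v) := by
  have h1v : (0:ℝ) < 1 + v := by linarith
  set z : E := y - x with hz
  set r : ℝ := ‖z‖ with hr_def
  have hr : 0 ≤ r := norm_nonneg z
  have hmem : ∀ t ∈ Set.Icc (0:ℝ) 1, x + t • z ∈ Q := fun t ht =>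
    hQ.add_smul_sub_mem hx hy ht
  set φ : ℝ → ℝ := fun t => f (x + t • z) with hφ
  have hderiv : ∀ t ∈ Set.Icc (0:ℝ) 1, HasDerivAt φ (⟪g (x + t • z), z⟫) t := by
    intro t ht
    have hγ : HasDerivAt (fun s : ℝ => x + s • z) z t := by
      simpa using ((hasDerivAt_id t).smul_const z).const_add x
    have hf := (hdiff _ (hmem t ht)).hasFDerivAt
    have := hf.comp_hasDerivAt t hγ
    exact this.congr_deriv (by simp [InnerProductSpace.toDual_apply_apply])
  set D : ℝ → ℝ := deriv φ with hD_def
  have hD : ∀ t ∈ Set.Icc (0:ℝ) 1, D t = ⟪g (x + t • z), z⟫ := fun t ht =>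
    (hderiv t ht).deriv
  have hderiv' : ∀ t ∈ Set.uIcc (0:ℝ) 1, HasDerivAt φ (D t) t := by
    intro t ht
    rw [Set.uIcc_of_le zero_le_one] at ht
    rw [hD t ht]
    exact hderiv t ht
  -- pointwise bound of the deviation
  have hdev : ∀ t ∈ Set.Icc (0:ℝ) 1, |D t - ⟪g x, z⟫| ≤ M * t ^ v * (r ^ v * r) := by
    intro t ht
    rw [hD t ht, ← inner_sub_left]
    refine (abs_real_inner_le_norm _ _).trans ?_
    have hgb : ‖g (x + t • z) - g x‖ ≤ M * (t * r) ^ v := by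
      have := hholder _ (hmem t ht) x hx
      simpa [norm_smul, abs_of_nonneg ht.1, hr_def] using this
    calc ‖g (x + t • z) - g x‖ * ‖z‖ ≤ M * (t * r) ^ v * r :=
          mul_le_mul_of_nonneg_right hgb (norm_nonneg z)
      _ = M * t ^ v * (r ^ v * r) := by
          rw [Real.mul_rpow ht.1 hr]; ring
  -- integrability
  have hmeas : Measurable D := measurable_deriv φ
  have hint : IntervalIntegrable D volume 0 1 := by
    rw [intervalIntegrable_iff]
    refine Measure.integrableOn_of_bounded (M := |⟪g x, z⟫| + M * (r ^ v * r))
      (by simp) hmeas.aestronglyMeasurable ?_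
    filter_upwards [ae_restrict_mem measurableSet_uIoc] with t ht
    have ht' : t ∈ Set.Icc (0:ℝ) 1 := by
      rw [Set.uIoc_of_le zero_le_one] at ht
      exact Set.Ioc_subset_Icc_self ht
    have h1 := hdev t ht'
    have h2 : t ^ v ≤ 1 := by
      rw [← Real.one_rpow v]
      exact Real.rpow_le_rpow ht'.1 ht'.2 hv0
    have hw : 0 ≤ r ^ v * r := mul_nonneg (Real.rpow_nonneg hr v) hr
    have h3 : M * t ^ v * (r ^ v * r) ≤ M * (r ^ v * r) := by
      nlinarith [mul_nonneg (mul_nonneg hM hw) (sub_nonneg.2 h2)]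
    rw [Real.norm_eq_abs]
    calc |D t| ≤ |⟪g x, z⟫| + |D t - ⟪g x, z⟫| := by
          have := abs_add_le (⟪g x, z⟫ : ℝ) (D t - ⟪g x, z⟫); simpa using this
      _ ≤ |⟪g x, z⟫| + M * (r ^ v * r) := by linarith
  -- FTC
  have hFTC : ∫ t in (0:ℝ)..1, D t = φ 1 - φ 0 :=
    intervalIntegral.integral_eq_sub_of_hasDerivAt hderiv' hint
  have hφ1 : φ 1 = f y := by simp [hφ, hz]
  have hφ0 : φ 0 = f x := by simp [hφ]
  -- compare integrals
  have hint2 : IntervalIntegrable (fun t => D t - ⟪g x, z⟫) volume 0 1 :=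
    hint.sub intervalIntegrable_const
  have hint3 : IntervalIntegrable (fun t : ℝ => M * (r ^ v * r) * t ^ v) volume 0 1 :=
    (intervalIntegral.intervalIntegrable_rpow (Or.inl hv0)).const_mul _
  have hmono : ∫ t in (0:ℝ)..1, (D t - ⟪g x, z⟫) ≤
      ∫ t in (0:ℝ)..1, M * (r ^ v * r) * t ^ v := by
    refine intervalIntegral.integral_mono_on zero_le_one hint2 hint3 ?_
    intro t ht
    have := (abs_le.1 (hdev t ht)).2
    linarith [this]
  have hval : ∫ t in (0:ℝ)..1, M * (r ^ v * r) * t ^ v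
      = M * (r ^ v * r) / (v + 1) := by
    rw [intervalIntegral.integral_const_mul,
      integral_rpow (Or.inl (by linarith : (-1:ℝ) < v))]
    rw [Real.one_rpow, Real.zero_rpow (by linarith : v + 1 ≠ 0)]
    ring
  have hsub : ∫ t in (0:ℝ)..1, (D t - ⟪g x, z⟫) = (f y - f x) - ⟪g x, z⟫ := by
    rw [intervalIntegral.integral_sub hint intervalIntegrable_const,
      hFTC, hφ1, hφ0]
    simp
  have hpow : M / (1 + v) * r ^ (1 + v) = M * (r ^ v * r) / (v + 1) := by
    rw [Real.rpow_add' hr (by linarith : (1:ℝ) + v ≠ 0), Real.rpow_one]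
    rw [div_mul_eq_mul_div]
    ring_nf
  rw [hsub, hval] at hmono
  rw [hpow]
  linarith [hmono.trans_eq rfl]

/-- **Nesterov's inexact-smoothness lemma.** If `f` is differentiable on a convex
set `Q` with `(M,v)`-Hölder continuous gradient `g` and `v ∈ [0,1)`, then for every
inexactness budget `δ > 0`, with `L(δ) = ((1-v)/((1+v)δ))^((1-v)/(1+v)) M^(2/(1+v))`,
`f` admits the inexact quadratic upper model
`f y ≤ f x + ⟪g x, y - x⟫ + (L(δ)/2) ‖y - x‖² + δ/2` on `Q`. -/
theorem holder_smooth_inexact_quadratic_upper_bound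
    {E : Type*} [NormedAddCommGroup E] [InnerProductSpace ℝ E] [CompleteSpace E]
    (Q : Set E) (hQ : Convex ℝ Q)
    (f : E → ℝ) (g : E → E) (M v : ℝ)
    (hM : 0 ≤ M) (hv : v ∈ Set.Ico (0 : ℝ) 1)
    (hdiff : ∀ x ∈ Q, HasGradientAt f (g x) x)
    (hholder : ∀ x ∈ Q, ∀ y ∈ Q, ‖g x - g y‖ ≤ M * ‖x - y‖ ^ v) :
    ∀ δ : ℝ, 0 < δ → ∀ x ∈ Q, ∀ y ∈ Q,
      f y ≤ f x + ⟪g x, y - x⟫ +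
        ((1 - v) / ((1 + v) * δ)) ^ ((1 - v) / (1 + v)) * M ^ (2 / (1 + v)) / 2 *
          ‖y - x‖ ^ 2 + δ / 2 := by
  intro δ hδ x hx y hy
  have hd := holder_descent Q hQ f g M v hM hv.1 hdiff hholder hx hy
  have hs := key_scalar M v δ ‖y - x‖ hM hv.1 hv.2 hδ (norm_nonneg _)
  linarith
end
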